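/- arXiv:1612.06475 — 2 statements merged into one kernel-verified Lean document; each statement's English description precedes it below -/
import Mathlib

section
/- Every final configuration reachable from the initial configuration has step number exactly 4n − 2; equivalently, every complete parse of a sentence of n words consists of exactly 4n − 2 actions, comprising n shift actions, n − 1 combine actions, and 2n − 1 label-step actions (label-X or nolabel). -/
/-!
Formalization of the span-based Structure/Label transition parsing system of
Cross & Huang (2016), "Span-Based Constituency Parsing with a Structure-Label
System and Provably Optimal Dynamic Oracles".

A configuration is `(z, σ, t)` where `z` is the step number, `σ` the stack of
span boundaries and `t` the set of brackets built so far.  A bracket is a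
triple `(X, i, j)` with `X` a nonterminal label and `i < j ≤ n` a span.
-/

namespace SpanParser

structure Config (N : Type*) where
  z : ℕ
  σ : List ℕ
  t : Finset (N × ℕ × ℕ)

variable {N : Type*}

/-- The span of a bracket. -/
def span (b : N × ℕ × ℕ) : ℕ × ℕ := b.2

/-- Top (rightmost) boundary of the stack. -/
def topJ (σ : List ℕ) : ℕ := σ.getLastD 0

/-- Second-to-top boundary of the stack. -/
def topI (σ : List ℕ) : ℕ := σ.dropLast.getLastD 0

/-- Parser actions: shift, combine, label-`X`, and nolabel. -/
inductive Action (N : Type*) where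
  | sh : Action N
  | comb : Action N
  | label : N → Action N
  | nolabel : Action N

variable [DecidableEq N]

/-- Applicability of an action at a configuration (for sentence length `n`). -/
def App (n : ℕ) (c : Config N) : Action N → Prop
  | .sh      => Even c.z ∧ c.σ ≠ [] ∧ topJ c.σ < n
  | .comb    => Even c.z ∧ 3 ≤ c.σ.length
  | .label _ => Odd c.z ∧ 2 ≤ c.σ.length
  | .nolabel => Odd c.z ∧ 2 ≤ c.σ.length ∧ c.z < 4 * n - 1

/-- The result `τ(c)` of applying action `τ` to configuration `c`. -/
def doAct (c : Config N) : Action N → Config N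
  | .sh      => ⟨c.z + 1, c.σ ++ [topJ c.σ + 1], c.t⟩
  | .comb    => ⟨c.z + 1, c.σ.dropLast.dropLast ++ [topJ c.σ], c.t⟩
  | .label X => ⟨c.z + 1, c.σ, insert (X, topI c.σ, topJ c.σ) c.t⟩
  | .nolabel => ⟨c.z + 1, c.σ, c.t⟩

/-- The initial configuration `(0, [0], ∅)`. -/
def initial (N : Type*) : Config N := ⟨0, [0], ∅⟩

/-- One transition step `c ⊢ c'`. -/
def Step (n : ℕ) (c c' : Config N) : Prop := ∃ a, App n c a ∧ c' = doAct c a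

/-- `⊢*`: reflexive-transitive closure of the transition relation. -/
def Reaches (n : ℕ) : Config N → Config N → Prop := Relation.ReflTransGen (Step n)

/-- A configuration is valid if it is reachable from the initial configuration. -/
def Valid (n : ℕ) (c : Config N) : Prop := Reaches n (initial N) c

/-- A final configuration: `σ = [0, n]` and `z = 4n - 2`. -/
def Final (n : ℕ) (c : Config N) : Prop := c.σ = [0, n] ∧ c.z = 4 * n - 2

/-- `D(c)`: the set of trees of final configurations reachable from `c`. -/
def Dset (n : ℕ) (c : Config N) : Set (Finset (N × ℕ × ℕ)) :=
  {t' | ∃ c', Reaches n c c' ∧ Final n c' ∧ c'.t = t'}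

/-- `(i,j) ⪯ (p,q)`: span `(i,j)` is encompassed by `(p,q)`, i.e. `p ≤ i < j ≤ q`. -/
def Enc (s₁ s₂ : ℕ × ℕ) : Prop := s₂.1 ≤ s₁.1 ∧ s₁.1 < s₁.2 ∧ s₁.2 ≤ s₂.2

/-- `(i,j) ≺ (p,q)`: strict encompassment. -/
def SEnc (s₁ s₂ : ℕ × ℕ) : Prop := Enc s₁ s₂ ∧ s₁ ≠ s₂

/-- `tG` is a gold tree for sentence length `n`: valid spans, pairwise-distinct
spans, pairwise non-crossing spans, and exactly one bracket with span `(0, n)`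
(uniqueness follows from distinctness of spans). -/
structure IsGold (n : ℕ) (tG : Finset (N × ℕ × ℕ)) : Prop where
  validSpans : ∀ b ∈ tG, (span b).1 < (span b).2 ∧ (span b).2 ≤ n
  distinctSpans : ∀ b₁ ∈ tG, ∀ b₂ ∈ tG, span b₁ = span b₂ → b₁ = b₂
  noncrossing : ∀ b₁ ∈ tG, ∀ b₂ ∈ tG,
    Enc (span b₁) (span b₂) ∨ Enc (span b₂) (span b₁) ∨
    (span b₁).2 ≤ (span b₂).1 ∨ (span b₂).2 ≤ (span b₁).1
  root : ∃ X, (X, 0, n) ∈ tG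

open Classical in
/-- `left(c)`: gold brackets (strictly, at even steps) encompassing the top
span whose left boundary occurs on the stack. -/
noncomputable def leftSet (tG : Finset (N × ℕ × ℕ)) (c : Config N) :
    Finset (N × ℕ × ℕ) :=
  tG.filter fun b =>
    (if Even c.z then SEnc (topI c.σ, topJ c.σ) (span b)
     else Enc (topI c.σ, topJ c.σ) (span b)) ∧ (span b).1 ∈ c.σ

open Classical in
/-- `right(c)`: gold brackets entirely on the queue. -/
noncomputable def rightSet (tG : Finset (N × ℕ × ℕ)) (c : Config N) :
    Finset (N × ℕ × ℕ) :=
  tG.filter fun b => topJ c.σ ≤ (span b).1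

open Classical in
/-- `reach(c)`: the reachable gold brackets (all of `t_G` at the initial
configuration, whose stack has fewer than two boundaries). -/
noncomputable def reach (tG : Finset (N × ℕ × ℕ)) (c : Config N) :
    Finset (N × ℕ × ℕ) :=
  if c.σ.length < 2 then tG else leftSet tG c ∪ rightSet tG c

/-- The optimal tree `t*(c) = t ∪ reach(c)`. -/
noncomputable def tstar (tG : Finset (N × ℕ × ℕ)) (c : Config N) :
    Finset (N × ℕ × ℕ) :=
  c.t ∪ reach tG c

/-- `b = next(c)`: the `≺`-minimal element of `left(c)`. -/
def IsNext (tG : Finset (N × ℕ × ℕ)) (c : Config N) (b : N × ℕ × ℕ) : Prop :=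
  b ∈ leftSet tG c ∧ ∀ b' ∈ leftSet tG c, Enc (span b) (span b')

/-- The dynamic-oracle policy `dyna(c)` as a predicate on actions. -/
def Dyna (tG : Finset (N × ℕ × ℕ)) (c : Config N) (a : Action N) : Prop :=
  if c.σ.length < 2 then a = Action.sh
  else if Even c.z then
    ∃ b, IsNext tG c b ∧
      (((span b).1 = topI c.σ ∧ topJ c.σ < (span b).2 ∧ a = Action.sh) ∨
       ((span b).1 < topI c.σ ∧ (span b).2 = topJ c.σ ∧ a = Action.comb) ∨
       ((span b).1 < topI c.σ ∧ topJ c.σ < (span b).2 ∧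
          (a = Action.sh ∨ a = Action.comb)))
  else
    (∃ X, (X, topI c.σ, topJ c.σ) ∈ tG ∧ a = Action.label X) ∨
    ((∀ X, (X, topI c.σ, topJ c.σ) ∉ tG) ∧ a = Action.nolabel)

/-- `F1` of a predicted bracket set `t'` against the gold tree `tG`
(`0` when `t' ∩ tG = ∅`). -/
noncomputable def f1 (tG t' : Finset (N × ℕ × ℕ)) : ℝ :=
  if t' ∩ tG = ∅ then 0
  else
    (2 * (((t' ∩ tG).card : ℝ) / (tG.card : ℝ)) * (((t' ∩ tG).card : ℝ) / (t'.card : ℝ))) /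
      ((((t' ∩ tG).card : ℝ) / (tG.card : ℝ)) + (((t' ∩ tG).card : ℝ) / (t'.card : ℝ)))

/-- `F1(c)`: the best `F1` among trees reachable from `c`. -/
noncomputable def configF1 (n : ℕ) (tG : Finset (N × ℕ × ℕ)) (c : Config N) : ℝ :=
  sSup (f1 tG '' Dset n c)

/-- A run of (applicable) actions from one configuration to another. -/
inductive Run (n : ℕ) : Config N → List (Action N) → Config N → Prop
  | refl (c : Config N) : Run n c [] c
  | step {c c' : Config N} {as : List (Action N)} (a : Action N)
      (happ : App n c a) (h : Run n (doAct c a) as c') : Run n c (a :: as) c'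

/-- A run all of whose actions follow the dynamic oracle. -/
inductive DynaRun (n : ℕ) (tG : Finset (N × ℕ × ℕ)) : Config N → Config N → Prop
  | refl (c : Config N) : DynaRun n tG c c
  | step {c c' : Config N} (a : Action N) (happ : App n c a) (hdyna : Dyna tG c a)
      (h : DynaRun n tG (doAct c a) c') : DynaRun n tG c c'

def isSh : Action N → Bool
  | .sh => true
  | _ => false

def isComb : Action N → Bool
  | .comb => true
  | _ => false

/-- Label-step actions: `label-X` or `nolabel`. -/
def isLabelStep : Action N → Bool
  | .label _ => true
  | .nolabel => true
  | _ => false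

/-!
Along a run the step number counts the actions, the top boundary counts the shifts and the
stack height is `1 + #sh - #comb`. Structural actions are applicable only at even steps and
label steps only at odd ones, so after `z` steps exactly `⌊z/2⌋` label steps were taken.
Ending with `σ = [0, n]` forces `n` shifts and `n - 1` combines, hence `z - ⌊z/2⌋ = 2n - 1`,
i.e. `z = 4n - 3` or `z = 4n - 2`; at `4n - 3` the action nolabel is still applicable.
-/

omit [DecidableEq N] in
theorem countP_isSh_add_countP_isComb_add_countP_isLabelStep (as : List (Action N)) :
    as.countP isSh + as.countP isComb + as.countP isLabelStep = as.length := by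
  induction as with
  | nil => rfl
  | cons a as ih => cases a <;> simp [List.countP_cons, isSh, isComb, isLabelStep] <;> omega

theorem topJ_append_singleton (l : List ℕ) (x : ℕ) : topJ (l ++ [x]) = x := by
  simp [topJ]

section Step

variable {n : ℕ} {c : Config N} {a : Action N}

theorem z_doAct : (doAct c a).z = c.z + 1 := by
  cases a <;> rfl

theorem topJ_doAct : topJ (doAct c a).σ = topJ c.σ + if isSh a then 1 else 0 := by
  cases a <;> simp [doAct, isSh, topJ_append_singleton]

theorem App.length_doAct (h : App n c a) :
    (doAct c a).σ.length + (if isComb a then 1 else 0) = c.σ.length + if isSh a then 1 else 0 := by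
  cases a
  case comb => have := h.2; simp [doAct, isSh, isComb]; omega
  all_goals simp [doAct, isSh, isComb]

omit [DecidableEq N] in
theorem App.isLabelStep_iff_odd (h : App n c a) : isLabelStep a = true ↔ Odd c.z := by
  cases a <;> simp only [App] at h <;> simp [isLabelStep, h.1, ← Nat.not_even_iff_odd]

theorem App.z_doAct_div_two (h : App n c a) :
    (doAct c a).z / 2 = c.z / 2 + if isLabelStep a then 1 else 0 := by
  rw [z_doAct]
  by_cases hlabel : isLabelStep a = true
  · obtain ⟨k, hk⟩ := h.isLabelStep_iff_odd.mp hlabel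
    simp only [hlabel, if_true]
    omega
  · obtain ⟨k, hk⟩ := Nat.not_odd_iff_even.mp (mt h.isLabelStep_iff_odd.mpr hlabel)
    simp only [hlabel, Bool.false_eq_true, if_false]
    omega

end Step

namespace Run

variable {n : ℕ} {c c' : Config N} {as : List (Action N)}

theorem z_eq (h : Run n c as c') : c'.z = c.z + as.length := by
  induction h with
  | refl => rfl
  | step a _ _ ih => rw [ih, z_doAct, List.length_cons]; omega

theorem topJ_eq (h : Run n c as c') : topJ c'.σ = topJ c.σ + as.countP isSh := by
  induction h with
  | refl => rfl
  | step a _ _ ih => rw [ih, topJ_doAct, List.countP_cons]; omega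

theorem length_add_countP_isComb (h : Run n c as c') :
    c'.σ.length + as.countP isComb = c.σ.length + as.countP isSh := by
  induction h with
  | refl => rfl
  | step a happ _ ih =>
    have := happ.length_doAct
    rw [List.countP_cons, List.countP_cons]
    omega

theorem countP_isLabelStep_add (h : Run n c as c') :
    as.countP isLabelStep + c.z / 2 = c'.z / 2 := by
  induction h with
  | refl => simp
  | step a happ _ ih =>
    have := happ.z_doAct_div_two
    rw [List.countP_cons]
    omega

theorem counts_of_σ_eq (h : Run n (initial N) as c) (hσ : c.σ = [0, n]) :
    c.z = as.length ∧ as.countP isSh = n ∧ as.countP isComb + 1 = n ∧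
      as.countP isLabelStep = c.z / 2 := by
  have hz := h.z_eq
  have htop := h.topJ_eq
  have hlen := h.length_add_countP_isComb
  have hlabel := h.countP_isLabelStep_add
  simp [initial, hσ, topJ] at hz htop hlen hlabel
  omega

end Run

theorem Reaches.exists_run {n : ℕ} {c c' : Config N} (h : Reaches n c c') :
    ∃ as, Run n c as c' := by
  induction h using Relation.ReflTransGen.head_induction_on with
  | refl => exact ⟨[], .refl _⟩
  | head hstep _ ih =>
    obtain ⟨a, happ, rfl⟩ := hstep
    obtain ⟨as, hrun⟩ := ih
    exact ⟨a :: as, .step a happ hrun⟩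

theorem final_step_count_general (N : Type*) [DecidableEq N] (n : ℕ) :
    (∀ c : Config N, Reaches n (initial N) c → c.σ = [0, n] →
        (∀ a, ¬ App n c a) → c.z = 4 * n - 2) ∧
    (∀ (as : List (Action N)) (c : Config N),
        Run n (initial N) as c → Final n c →
      as.length = 4 * n - 2 ∧ as.countP isSh = n ∧
        as.countP isComb = n - 1 ∧ as.countP isLabelStep = 2 * n - 1) := by
  constructor
  · intro c hreach hσ hstuck
    obtain ⟨as, hrun⟩ := hreach.exists_run
    obtain ⟨hz, hsh, hcomb, hlabel⟩ := hrun.counts_of_σ_eq hσ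
    have hsum := countP_isSh_add_countP_isComb_add_countP_isLabelStep as
    rcases Nat.even_or_odd c.z with heven | hodd
    · obtain ⟨k, hk⟩ := heven
      omega
    · refine absurd ⟨hodd, ?_, ?_⟩ (hstuck .nolabel)
      · simp [hσ]
      · obtain ⟨k, hk⟩ := hodd
        omega
  · rintro as c hrun ⟨hσ, hz⟩
    obtain ⟨hlen, hsh, hcomb, -⟩ := hrun.counts_of_σ_eq hσ
    have hsum := countP_isSh_add_countP_isComb_add_countP_isLabelStep as
    omega

/-- Every completed parse of a sentence of `n` words ends at step `4n - 2`:
a reachable configuration covering the whole sentence with no applicable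
action has step number `4n - 2`, and every run from the initial configuration
to a final configuration consists of exactly `4n - 2` actions, namely `n`
shifts, `n - 1` combines, and `2n - 1` label steps (label-`X` or nolabel). -/
theorem final_step_count (N : Type*) [DecidableEq N] (n : ℕ) (hn : 1 ≤ n) :
    (∀ c : Config N, Reaches n (initial N) c → c.σ = [0, n] →
        (∀ a, ¬ App n c a) → c.z = 4 * n - 2) ∧
    (∀ (as : List (Action N)) (c : Config N),
        Run n (initial N) as c → Final n c →
      as.length = 4 * n - 2 ∧ as.countP isSh = n ∧
        as.countP isComb = n - 1 ∧ as.countP isLabelStep = 2 * n - 1) :=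
  final_step_count_general N n

end SpanParser
end

section
/- For every valid configuration c = (z, σ, t) and every reachable tree t' ∈ D(c): the brackets already built persist, t ⊆ t', and every gold bracket of t' not already in t is reachable, i.e., t' ∩ t_G ⊆ t ∪ reach(c). -/
/-!
Formalization of the span-based Structure/Label transition parsing system of
Cross & Huang (2016), "Span-Based Constituency Parsing with a Structure-Label
System and Provably Optimal Dynamic Oracles".

A configuration is `(z, σ, t)` where `z` is the step number, `σ` the stack of
span boundaries and `t` the set of brackets built so far.  A bracket is a
triple `(X, i, j)` with `X` a nonterminal label and `i < j ≤ n` a span.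
-/

namespace SpanParser

variable {N : Type*}

variable [DecidableEq N]

/-!
Along every transition the gold part of the optimal tree `t*(c) = t ∪ reach(c)` can only
shrink. Shift and combine leave `t` unchanged and only narrow `reach`: after a shift, a
bracket of `left` encompassing the new one-word span either starts at the old top boundary,
and so lies in the old `right`, or starts further left and strictly encompasses the old top
span; after a combine, a bracket encompassing the merged span strictly encompasses its right
half. Label actions keep the stack, hence only relax strictness, and the bracket they add is
the top span, which lies in `left(c)` whenever it is gold. As `t ⊆ t*` and brackets are
never removed, every final tree reached from `c` contains `t` and has its gold brackets in
`t*(c)`. All of this rests on the stack of a valid configuration being strictly increasing.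
-/

lemma exists_eq_append_pair {α : Type*} {l : List α} (h : 2 ≤ l.length) :
    ∃ l' a b, l = l' ++ [a, b] := by
  rcases l.eq_nil_or_concat' with rfl | ⟨l₁, b, rfl⟩
  · simp at h
  rcases l₁.eq_nil_or_concat' with rfl | ⟨l', a, rfl⟩
  · simp at h
  exact ⟨l', a, b, by simp⟩

lemma exists_eq_append_triple {α : Type*} {l : List α} (h : 3 ≤ l.length) :
    ∃ l' a b c, l = l' ++ [a, b, c] := by
  rcases l.eq_nil_or_concat' with rfl | ⟨l₁, c, rfl⟩
  · simp at h
  obtain ⟨l', a, b, rfl⟩ := exists_eq_append_pair (l := l₁) (by simp at h; omega)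
  exact ⟨l', a, b, c, by simp⟩

lemma pairwise_doAct {n : ℕ} {c : Config N} {a : Action N} (happ : App n c a)
    (hs : c.σ.Pairwise (· < ·)) : (doAct c a).σ.Pairwise (· < ·) := by
  obtain ⟨z, σ, t⟩ := c
  cases a with
  | sh =>
    rcases σ.eq_nil_or_concat' with rfl | ⟨l, j, rfl⟩
    · exact absurd rfl happ.2.1
    grind [doAct, topJ]
  | comb =>
    obtain ⟨l, i, k, j, rfl⟩ := exists_eq_append_triple happ.2
    grind [doAct, topJ]
  | label X => exact hs
  | nolabel => exact hs

lemma Valid.pairwise {n : ℕ} {c : Config N} (hc : Valid n c) : c.σ.Pairwise (· < ·) := by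
  induction hc with
  | refl => simp [initial]
  | tail _ hstep ih =>
    obtain ⟨a, happ, rfl⟩ := hstep
    exact pairwise_doAct happ ih

lemma reach_subset (tG : Finset (N × ℕ × ℕ)) (c : Config N) : reach tG c ⊆ tG := by
  classical
  unfold reach
  split
  · exact subset_rfl
  · exact Finset.union_subset (fun _ hb => (Finset.mem_filter.1 hb).1)
      (fun _ hb => (Finset.mem_filter.1 hb).1)

lemma mem_reach_of_even {tG : Finset (N × ℕ × ℕ)} {c : Config N} (h2 : 2 ≤ c.σ.length)
    (hz : Even c.z) {b : N × ℕ × ℕ} :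
    b ∈ reach tG c ↔ b ∈ tG ∧
      (SEnc (topI c.σ, topJ c.σ) (span b) ∧ (span b).1 ∈ c.σ ∨ topJ c.σ ≤ (span b).1) := by
  rw [reach, if_neg (by omega)]
  simp [leftSet, rightSet, hz, and_or_left]

lemma mem_reach_of_odd {tG : Finset (N × ℕ × ℕ)} {c : Config N} (h2 : 2 ≤ c.σ.length)
    (hz : Odd c.z) {b : N × ℕ × ℕ} :
    b ∈ reach tG c ↔ b ∈ tG ∧
      (Enc (topI c.σ, topJ c.σ) (span b) ∧ (span b).1 ∈ c.σ ∨ topJ c.σ ≤ (span b).1) := by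
  rw [reach, if_neg (by omega)]
  simp [leftSet, rightSet, Nat.not_even_iff_odd.2 hz, and_or_left]

lemma reach_doAct_sh_subset (tG : Finset (N × ℕ × ℕ)) {c : Config N} (hz : Even c.z)
    (hs : c.σ.Pairwise (· < ·)) : reach tG (doAct c .sh) ⊆ reach tG c := by
  obtain ⟨z, σ, t⟩ := c
  by_cases h2 : σ.length < 2
  · simpa [reach, h2] using reach_subset tG _
  obtain ⟨l, i, j, rfl⟩ := exists_eq_append_pair (not_lt.1 h2)
  intro ⟨X, p, q⟩ hb
  rw [mem_reach_of_odd (by simp [doAct]) (by simpa [doAct] using hz.add_one)] at hb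
  rw [mem_reach_of_even (by simp) hz]
  simp [doAct, topI, topJ, span, Enc, SEnc, List.pairwise_append] at hb hs ⊢
  grind

lemma reach_doAct_comb_subset (tG : Finset (N × ℕ × ℕ)) {c : Config N} (hz : Even c.z)
    (h3 : 3 ≤ c.σ.length) (hs : c.σ.Pairwise (· < ·)) :
    reach tG (doAct c .comb) ⊆ reach tG c := by
  obtain ⟨z, σ, t⟩ := c
  obtain ⟨l, i, k, j, rfl⟩ := exists_eq_append_triple h3
  intro ⟨X, p, q⟩ hb
  rw [mem_reach_of_odd (by simp [doAct]) (by simpa [doAct] using hz.add_one)] at hb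
  rw [mem_reach_of_even (by simp) hz]
  simp [doAct, topI, topJ, span, Enc, SEnc, List.pairwise_append] at hb hs ⊢
  grind

lemma reach_succ_subset_of_odd (tG : Finset (N × ℕ × ℕ)) {c : Config N} (hz : Odd c.z)
    (h2 : 2 ≤ c.σ.length) (t : Finset (N × ℕ × ℕ)) :
    reach tG ⟨c.z + 1, c.σ, t⟩ ⊆ reach tG c := by
  intro b hb
  rw [mem_reach_of_even (c := ⟨c.z + 1, c.σ, t⟩) h2 hz.add_one] at hb
  rw [mem_reach_of_odd h2 hz]
  exact ⟨hb.1, hb.2.imp_left fun h => ⟨h.1.1, h.2⟩⟩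

lemma reach_doAct_subset (tG : Finset (N × ℕ × ℕ)) {n : ℕ} {c : Config N} {a : Action N}
    (happ : App n c a) (hs : c.σ.Pairwise (· < ·)) : reach tG (doAct c a) ⊆ reach tG c := by
  cases a with
  | sh => exact reach_doAct_sh_subset tG happ.1 hs
  | comb => exact reach_doAct_comb_subset tG happ.1 happ.2 hs
  | label X => exact reach_succ_subset_of_odd tG happ.1 happ.2 _
  | nolabel => exact reach_succ_subset_of_odd tG happ.1 happ.2.1 _

lemma top_mem_reach_of_odd {tG : Finset (N × ℕ × ℕ)} {c : Config N} (hz : Odd c.z)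
    (h2 : 2 ≤ c.σ.length) (hs : c.σ.Pairwise (· < ·)) {X : N}
    (hX : (X, topI c.σ, topJ c.σ) ∈ tG) : (X, topI c.σ, topJ c.σ) ∈ reach tG c := by
  obtain ⟨z, σ, t⟩ := c
  obtain ⟨l, i, j, rfl⟩ := exists_eq_append_pair h2
  refine (mem_reach_of_odd h2 hz).2 ⟨hX, Or.inl ⟨⟨le_rfl, ?_, le_rfl⟩, ?_⟩⟩
  · simpa [topI, topJ] using List.pairwise_pair.1 (List.pairwise_append.1 hs).2.1
  · simp [topI, span]

lemma tstar_doAct_inter_subset (tG : Finset (N × ℕ × ℕ)) {n : ℕ} {c : Config N}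
    {a : Action N} (happ : App n c a) (hs : c.σ.Pairwise (· < ·)) :
    tstar tG (doAct c a) ∩ tG ⊆ tstar tG c := by
  have hreach := reach_doAct_subset tG happ hs
  intro b hb
  obtain ⟨hbt, hbG⟩ := Finset.mem_inter.1 hb
  rcases Finset.mem_union.1 hbt with hb | hb
  · cases a with
    | label X =>
      obtain rfl | hb := Finset.mem_insert.1 hb
      · exact Finset.mem_union_right _ (top_mem_reach_of_odd happ.1 happ.2 hs hbG)
      · exact Finset.mem_union_left _ hb
    | _ => exact Finset.mem_union_left _ hb
  · exact Finset.mem_union_right _ (hreach hb)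

lemma t_subset_doAct (c : Config N) (a : Action N) : c.t ⊆ (doAct c a).t := by
  cases a with
  | label X => exact Finset.subset_insert _ _
  | _ => exact subset_rfl

lemma Reaches.t_subset {n : ℕ} {c c' : Config N} (h : Reaches n c c') : c.t ⊆ c'.t := by
  induction h with
  | refl => exact subset_rfl
  | tail _ hstep ih =>
    obtain ⟨a, -, rfl⟩ := hstep
    exact ih.trans (t_subset_doAct _ a)

lemma Reaches.tstar_inter_subset (tG : Finset (N × ℕ × ℕ)) {n : ℕ} {c c' : Config N}
    (h : Reaches n c c') (hs : c.σ.Pairwise (· < ·)) : tstar tG c' ∩ tG ⊆ tstar tG c := by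
  induction h using Relation.ReflTransGen.head_induction_on with
  | refl => exact Finset.inter_subset_left
  | head hstep _ ih =>
    obtain ⟨a, happ, rfl⟩ := hstep
    exact (Finset.subset_inter (ih (pairwise_doAct happ hs)) Finset.inter_subset_right).trans
      (tstar_doAct_inter_subset tG happ hs)

theorem dset_brackets_general (n : ℕ) (tG : Finset (N × ℕ × ℕ))
    (c : Config N) (hc : Valid n c)
    (t' : Finset (N × ℕ × ℕ)) (ht' : t' ∈ Dset n c) :
    c.t ⊆ t' ∧ t' ∩ tG ⊆ c.t ∪ reach tG c := by
  obtain ⟨c', hreach, -, rfl⟩ := ht'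
  refine ⟨hreach.t_subset, ?_⟩
  calc c'.t ∩ tG ⊆ tstar tG c' ∩ tG := Finset.inter_subset_inter_right Finset.subset_union_left
    _ ⊆ tstar tG c := hreach.tstar_inter_subset tG hc.pairwise

/-- For every valid configuration `c = (z, σ, t)` and every reachable tree
`t' ∈ D(c)`: the built brackets persist, `t ⊆ t'`, and every gold bracket of
`t'` is either already built or reachable: `t' ∩ t_G ⊆ t ∪ reach(c)`. -/
theorem dset_brackets (n : ℕ) (hn : 1 ≤ n) (tG : Finset (N × ℕ × ℕ))
    (hG : IsGold n tG) (c : Config N) (hc : Valid n c)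
    (t' : Finset (N × ℕ × ℕ)) (ht' : t' ∈ Dset n c) :
    c.t ⊆ t' ∧ t' ∩ tG ⊆ c.t ∪ reach tG c :=
  dset_brackets_general n tG c hc t' ht'

end SpanParser
end
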